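/- arXiv:1708.04381 — 8 statements merged into one kernel-verified Lean document; each statement's English description precedes it below -/
import Mathlib

section
/- Let S be a string of length n, let k ≥ 1, and let x be an integer with 1 ≤ x ≤ n/2. Define I = { i : 1 ≤ i ≤ x/(4k+2) and HAM(S[1,x], S[i+1,i+x]) ≤ k }. Then for any two p, q ∈ I with p < q, their greatest common divisor d = gcd(p,q) satisfies HAM(S[1,x], S[d+1,d+x]) ≤ 16k² + 1. -/
/-- `hamShift S x i` = HAM(S[1,x], S[i+1,i+x]) = |{z : 1 ≤ z ≤ x, S[z] ≠ S[z+i]}|. -/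
def hamShift {α : Type*} [DecidableEq α] (S : ℕ → α) (x i : ℕ) : ℕ :=
  ((Finset.Icc 1 x).filter fun z => S z ≠ S (z + i)).card

/-!
Let `d = gcd p q`. The residues `s, s + p, s + 2p, …` modulo `p + q` form a walk on
`[0, p + q)` with steps `+p` and `-q` which reaches `s + d` in fewer than `(p + q) / d` steps.
Hence a `d`-mismatch at `z` forces a `p`- or `q`-mismatch at one of these steps in a window of
length `p + q` around `z`.

If `q / d ≤ 2k`, charging every `d`-mismatch to such a step gives at most
`2 · (4k - 2) · 2k` of them. If `q / d > 2k`, the at most `2k` mismatches of `p` and `q` leave a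
window of length `p + q` free of them, on which `S` is `d`-periodic. Outside the window the
`d`-mismatches fall into maximal arithmetic runs of step `p` and of step `q`, each ending (on the
side of the window) at one of at most `2k` positions next to a `p`- resp. `q`-mismatch. A `p`-run
and a `q`-run share at most one point: two common points differ by a multiple of
`lcm p q = p · (q / d)`, and then the `p`-run would meet `q / d > 2k` distinct `q`-runs. So there
are at most `4k²` `d`-mismatches on each side of the window.
-/

open Finset

namespace HammingShift

def walk (p q s t : ℕ) : ℕ := (s + t * p) % (p + q)

lemma walk_zero {p q s : ℕ} (hs : s < p + q) : walk p q s 0 = s := by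
  simp [walk, Nat.mod_eq_of_lt hs]

lemma walk_succ (p q s t : ℕ) : walk p q s (t + 1) = (walk p q s t + p) % (p + q) := by
  rw [walk, walk, Nat.mod_add_mod, add_one_mul, add_assoc]

lemma walk_lt (p q s t : ℕ) (hpq : 0 < p + q) : walk p q s t < p + q :=
  Nat.mod_lt _ hpq

lemma add_mod_add_cases {p q y : ℕ} (hy : y < p + q) :
    ((y + p) % (p + q) = y + p ∧ y < q) ∨ (y = (y + p) % (p + q) + q ∧ (y + p) % (p + q) < p) := by
  rcases lt_or_ge y q with h | h
  · exact Or.inl ⟨Nat.mod_eq_of_lt (by omega), h⟩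
  · right
    rw [Nat.mod_eq_sub_mod (by omega), Nat.mod_eq_of_lt (by omega)]
    omega

lemma exists_walk_eq_add_gcd {p q : ℕ} (hp : 0 < p) (hq : 0 < q) :
    ∃ T < (p + q) / Nat.gcd p q,
      ∀ s, s + Nat.gcd p q < p + q → walk p q s T = s + Nat.gcd p q := by
  set d := Nat.gcd p q
  have hd : 0 < d := Nat.gcd_pos_of_pos_left q hp
  have hgcd : Nat.gcd p (p + q) = d := by rw [add_comm, Nat.gcd_add_self_right]
  obtain ⟨T₀, -, hT₀⟩ := Nat.exists_mul_mod_eq_gcd (k := p + q) (n := p)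
    (by rw [hgcd]; exact (Nat.gcd_le_left q hp).trans_lt (by omega))
  have hm : (p + q) ∣ (p + q) / d * p := by
    rw [Nat.div_mul_right_comm (Nat.dvd_add (Nat.gcd_dvd_left p q) (Nat.gcd_dvd_right p q)),
      Nat.mul_div_assoc _ (Nat.gcd_dvd_left p q)]
    exact dvd_mul_right _ _
  have hmpos : 0 < (p + q) / d :=
    Nat.div_pos (by rw [← hgcd]; exact Nat.gcd_le_right _ (by omega)) hd
  refine ⟨T₀ % ((p + q) / d), Nat.mod_lt _ hmpos, fun s hs => ?_⟩
  have hstep : T₀ % ((p + q) / d) * p ≡ d [MOD p + q] :=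
    calc T₀ % ((p + q) / d) * p ≡ T₀ * p [MOD p + q] :=
          ((Nat.mod_modEq _ _).mul_right' p).of_dvd hm
      _ ≡ d [MOD p + q] := by
        rw [Nat.ModEq, mul_comm, hT₀, hgcd, Nat.mod_eq_of_lt (by omega)]
  have := Nat.ModEq.add_left s hstep
  rwa [Nat.ModEq, Nat.mod_eq_of_lt hs] at this

lemma mul_div_gcd_le_of_dvd {p q m : ℕ} (hm : 0 < m) (hp : p ∣ m) (hq : q ∣ m) :
    p * (q / Nat.gcd p q) ≤ m := by
  rw [← Nat.mul_div_assoc _ (Nat.gcd_dvd_right p q)]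
  exact Nat.le_of_dvd hm (Nat.lcm_dvd hp hq)

lemma dvd_sub_of_add_mul_eq {a b r i j : ℕ} (h : a + r * i = b + r * j) (hab : a ≤ b) :
    r ∣ b - a :=
  (Nat.modEq_iff_dvd' hab).1 <| by
    simpa [Nat.ModEq, Nat.add_mul_mod_self_left] using congrArg (· % r) h

lemma exists_lt_ne_succ_of_ne {β : Type*} {f : ℕ → β} {T : ℕ} (h : f 0 ≠ f T) :
    ∃ t < T, f t ≠ f (t + 1) := by
  contrapose! h
  induction T with
  | zero => rfl
  | succ T ih => exact (ih fun t ht => h t (by omega)).trans (h T (by omega))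

section Runs

variable {Z C Cp Cq : Finset ℕ} {p q r z : ℕ}

/-- The number of steps `r` one can go up from `z` without leaving `Z`. -/
def runLength (Z : Finset ℕ) (r z : ℕ) : ℕ :=
  Nat.findGreatest (fun j => ∀ i ≤ j, z + r * i ∈ Z) (Z.sup id)

lemma add_mul_mem_of_le_runLength {i : ℕ} (hz : z ∈ Z) (hi : i ≤ runLength Z r z) :
    z + r * i ∈ Z :=
  Nat.findGreatest_spec (P := fun j => ∀ i ≤ j, z + r * i ∈ Z) (m := 0) (Nat.zero_le _)
    (fun i hi => by simpa [Nat.le_zero.1 hi] using hz) i hi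

lemma add_mul_runLength_add_notMem (hr : 0 < r) (hz : z ∈ Z) :
    z + r * runLength Z r z + r ∉ Z := by
  intro h
  have hL : runLength Z r z + 1 ≤ runLength Z r z := by
    refine Nat.le_findGreatest ?_ fun i hi => ?_
    · have hsup : z + r * runLength Z r z + r ≤ Z.sup id := le_sup (f := id) h
      have : runLength Z r z + 1 ≤ r * (runLength Z r z + 1) := Nat.le_mul_of_pos_left _ hr
      rw [mul_add_one] at this
      omega
    · rcases hi.lt_or_eq with hi | rfl
      · exact add_mul_mem_of_le_runLength hz (by omega)
      · rwa [mul_add_one, ← add_assoc]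
  omega

lemma runEnd_mem (hr : 0 < r) (hends : ∀ z ∈ Z, z + r ∉ Z → z ∈ C) (hz : z ∈ Z) :
    z + r * runLength Z r z ∈ C :=
  hends _ (add_mul_mem_of_le_runLength hz le_rfl) (add_mul_runLength_add_notMem hr hz)

lemma div_gcd_le_card_of_le_runLength (hp : 0 < p) (hq : 0 < q)
    (hends : ∀ z ∈ Z, z + q ∉ Z → z ∈ Cq) (hz : z ∈ Z)
    (hlong : q / Nat.gcd p q ≤ runLength Z p z) : q / Nat.gcd p q ≤ #Cq := by
  set e : ℕ → ℕ := fun j => z + p * j + q * runLength Z q (z + p * j)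
  have hmem : ∀ j < q / Nat.gcd p q, z + p * j ∈ Z := fun j hj =>
    add_mul_mem_of_le_runLength hz (by omega)
  -- equal `q`-run ends would make `p * (j - i)` a common multiple of `p` and `q` below `lcm p q`
  have hne : ∀ i j, i < j → j < q / Nat.gcd p q → e i ≠ e j := by
    intro i j hij hj he
    have hdvd : q ∣ p * (j - i) := by
      have := dvd_sub_of_add_mul_eq he (Nat.add_le_add_left (Nat.mul_le_mul_left _ hij.le) _)
      rwa [Nat.add_sub_add_left, ← Nat.mul_sub] at this
    have := mul_div_gcd_le_of_dvd (Nat.mul_pos hp (by omega)) (dvd_mul_right p _) hdvd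
    have := Nat.le_of_mul_le_mul_left this hp
    omega
  calc q / Nat.gcd p q = #(range (q / Nat.gcd p q)) := (card_range _).symm
    _ ≤ #Cq := by
      refine card_le_card_of_injOn e (fun j hj => runEnd_mem hq hends (hmem j (mem_range.1 hj)))
        fun i hi j hj he => ?_
      rcases lt_trichotomy i j with h | h | h
      · exact (hne i j h (mem_range.1 hj) he).elim
      · exact h
      · exact (hne j i h (mem_range.1 hi) he.symm).elim

theorem card_le_mul_card_of_runEnds (hp : 0 < p) (hq : 0 < q) (hCq : #Cq < q / Nat.gcd p q)
    (hendp : ∀ z ∈ Z, z + p ∉ Z → z ∈ Cp) (hendq : ∀ z ∈ Z, z + q ∉ Z → z ∈ Cq) :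
    #Z ≤ #Cp * #Cq := by
  set e : ℕ → ℕ × ℕ := fun z => (z + p * runLength Z p z, z + q * runLength Z q z)
  have hne : ∀ z₁ ∈ Z, ∀ z₂ ∈ Z, z₁ < z₂ → e z₁ ≠ e z₂ := by
    intro z₁ hz₁ z₂ hz₂ hlt he
    simp only [e, Prod.mk.injEq] at he
    have hlcm := mul_div_gcd_le_of_dvd (by omega) (dvd_sub_of_add_mul_eq he.1 hlt.le)
      (dvd_sub_of_add_mul_eq he.2 hlt.le)
    have hlong : q / Nat.gcd p q ≤ runLength Z p z₁ :=
      Nat.le_of_mul_le_mul_left (by omega) hp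
    exact (div_gcd_le_card_of_le_runLength hp hq hendq hz₁ hlong).not_gt hCq
  calc #Z ≤ #(Cp ×ˢ Cq) := by
        refine card_le_card_of_injOn e
          (fun z hz => mem_product.2 ⟨runEnd_mem hp hendp hz, runEnd_mem hq hendq hz⟩)
          fun z₁ hz₁ z₂ hz₂ he => ?_
        rcases lt_trichotomy z₁ z₂ with h | h | h
        · exact (hne z₁ hz₁ z₂ hz₂ h he).elim
        · exact h
        · exact (hne z₂ hz₂ z₁ hz₁ h he.symm).elim
    _ = #Cp * #Cq := card_product _ _

lemma reflect_runEnds_of_runStarts (hstart : ∀ z ∈ Z, (∀ y ∈ Z, y + r ≠ z) → z ∈ C) :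
    ∀ z ∈ Z.image (Z.sup id - ·), z + r ∉ Z.image (Z.sup id - ·) → z ∈ C.image (Z.sup id - ·) := by
  intro z' hz' hend
  obtain ⟨z, hz, rfl⟩ := mem_image.1 hz'
  refine mem_image_of_mem _ (hstart z hz fun y hy hyz => hend (mem_image.2 ⟨y, hy, ?_⟩))
  have := le_sup (f := id) hz
  simp only [id] at this
  omega

theorem card_le_mul_card_of_runStarts (hp : 0 < p) (hq : 0 < q) (hCq : #Cq < q / Nat.gcd p q)
    (hstartp : ∀ z ∈ Z, (∀ y ∈ Z, y + p ≠ z) → z ∈ Cp)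
    (hstartq : ∀ z ∈ Z, (∀ y ∈ Z, y + q ≠ z) → z ∈ Cq) :
    #Z ≤ #Cp * #Cq := by
  have hinj : Set.InjOn (Z.sup id - ·) Z := fun a ha b hb h => by
    have := le_sup (f := id) ha
    have := le_sup (f := id) hb
    simp only [id] at *
    omega
  rw [← card_image_of_injOn hinj]
  exact (card_le_mul_card_of_runEnds hp hq (card_image_le.trans_lt hCq)
    (reflect_runEnds_of_runStarts hstartp) (reflect_runEnds_of_runStarts hstartq)).trans
    (Nat.mul_le_mul card_image_le card_image_le)

end Runs

section Strings

variable {α : Type*} [DecidableEq α] (S : ℕ → α) {x p q : ℕ}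

def mismatches (S : ℕ → α) (x i : ℕ) : Finset ℕ :=
  (Icc 1 x).filter fun z => S z ≠ S (z + i)

lemma mem_mismatches {i z : ℕ} : z ∈ mismatches S x i ↔ (1 ≤ z ∧ z ≤ x) ∧ S z ≠ S (z + i) := by
  simp [mismatches]

lemma card_mismatches (i : ℕ) : #(mismatches S x i) = hamShift S x i := rfl

omit [DecidableEq α] in
lemma exists_walk_step_ne {A s T d : ℕ} (hs : s < p + q) (hreach : walk p q s T = s + d)
    (hne : S (A + s) ≠ S (A + s + d)) :
    ∃ t < T, (walk p q s t < q ∧ S (A + walk p q s t) ≠ S (A + walk p q s t + p)) ∨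
      (walk p q s (t + 1) < p ∧ S (A + walk p q s (t + 1)) ≠ S (A + walk p q s (t + 1) + q)) := by
  obtain ⟨t, ht, hstep⟩ := exists_lt_ne_succ_of_ne (T := T) (f := fun t => S (A + walk p q s t))
    (by simpa only [walk_zero hs, hreach, add_assoc] using hne)
  refine ⟨t, ht, ?_⟩
  simp only [walk_succ] at hstep ⊢
  rcases add_mod_add_cases (walk_lt p q s t (by omega)) with ⟨he, hlt⟩ | ⟨he, hlt⟩
  · rw [he, ← add_assoc] at hstep
    exact Or.inl ⟨hlt, hstep⟩
  · refine Or.inr ⟨hlt, fun h => hstep ?_⟩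
    rw [h, add_assoc, ← he]

/-- A weak form of the Fine–Wilf theorem, on a window of length `p + q`. -/
lemma eq_add_gcd_of_window (hp : 0 < p) (hq : 0 < q) {l : ℕ}
    (hP : ∀ w, l ≤ w → w < l + q → S w = S (w + p))
    (hQ : ∀ w, l ≤ w → w < l + p → S w = S (w + q))
    {z : ℕ} (hlz : l ≤ z) (hz : z + Nat.gcd p q < l + (p + q)) :
    S z = S (z + Nat.gcd p q) := by
  obtain ⟨T, -, hT⟩ := exists_walk_eq_add_gcd hp hq
  by_contra hne
  obtain ⟨t, -, ⟨hlt, hstep⟩ | ⟨hlt, hstep⟩⟩ := exists_walk_step_ne S (A := l) (s := z - l)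
    (by omega) (hT _ (by omega)) (by rwa [Nat.add_sub_cancel' hlz])
  · exact hstep (hP _ (by omega) (by omega))
  · exact hstep (hQ _ (by omega) (by omega))

lemma card_le_mul_of_walk {d s T : ℕ} (hs : s < p + q) (hreach : walk p q s T = s + d)
    {Z : Finset ℕ}
    (hZ : ∀ z ∈ Z, s < z ∧ z + q ≤ x + 1 + s ∧ z + p ≤ x + 1 + s ∧ S z ≠ S (z + d)) :
    #Z ≤ T * (hamShift S x p + hamShift S x q) := by
  set U := (range T).biUnion fun t => (mismatches S x p).image (· + s - walk p q s t) ∪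
    (mismatches S x q).image (· + s - walk p q s (t + 1))
  have hZU : Z ⊆ U := by
    intro z hz
    obtain ⟨hsz, hzq, hzp, hne⟩ := hZ z hz
    obtain ⟨t, ht, hstep⟩ := exists_walk_step_ne S (A := z - s) hs hreach
      (by rwa [Nat.sub_add_cancel hsz.le])
    simp only [U, mem_biUnion, mem_range, mem_union, mem_image, mem_mismatches]
    refine ⟨t, ht, ?_⟩
    rcases hstep with ⟨hlt, hne'⟩ | ⟨hlt, hne'⟩
    · exact Or.inl ⟨_, ⟨⟨by omega, by omega⟩, hne'⟩, by omega⟩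
    · exact Or.inr ⟨_, ⟨⟨by omega, by omega⟩, hne'⟩, by omega⟩
  calc #Z ≤ #U := card_le_card hZU
    _ ≤ #(range T) * (hamShift S x p + hamShift S x q) :=
      card_biUnion_le_card_mul _ _ _ fun _ _ =>
        (card_union_le _ _).trans (add_le_add card_image_le card_image_le)
    _ = T * (hamShift S x p + hamShift S x q) := by rw [card_range]

theorem hamShift_gcd_le_of_walk (hp : 0 < p) (hpq : p ≤ q) (hx : p + 2 * q ≤ x) {T : ℕ}
    (hT : ∀ s, s + Nat.gcd p q < p + q → walk p q s T = s + Nat.gcd p q) :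
    hamShift S x (Nat.gcd p q) ≤ 2 * T * (hamShift S x p + hamShift S x q) := by
  have hd : 0 < Nat.gcd p q := Nat.gcd_pos_of_pos_left q hp
  have hdp : Nat.gcd p q ≤ p := Nat.gcd_le_left q hp
  -- `d`-mismatches near the right end use a window ending at `z + d` instead of one starting at `z`
  have hup := card_le_mul_of_walk S (x := x) (s := 0) (by omega) (hT 0 (by omega))
    (Z := (mismatches S x (Nat.gcd p q)).filter (· + q ≤ x + 1)) (by
      intro z hz
      simp only [mem_filter, mem_mismatches] at hz
      exact ⟨by omega, by omega, by omega, hz.1.2⟩)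
  have hdown := card_le_mul_of_walk S (x := x) (s := p + q - 1 - Nat.gcd p q) (by omega)
    (hT _ (by omega))
    (Z := (mismatches S x (Nat.gcd p q)).filter fun z => ¬ z + q ≤ x + 1) (by
      intro z hz
      simp only [mem_filter, mem_mismatches] at hz
      exact ⟨by omega, by omega, by omega, hz.1.2⟩)
  rw [← card_mismatches, ← card_filter_add_card_filter_not (· + q ≤ x + 1)]
  linarith

lemma exists_window_disjoint (B : Finset ℕ) {m L : ℕ} (hB : #B < m) (hx : m * L ≤ x) :
    ∃ l, 1 ≤ l ∧ l + L ≤ x + 1 ∧ ∀ w, l ≤ w → w < l + L → w ∉ B := by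
  obtain ⟨i, hi, hiB⟩ := exists_mem_notMem_of_card_lt_card (s := B.image fun b => (b - 1) / L)
    (t := range m) (by rw [card_range]; exact card_image_le.trans_lt hB)
  rw [mem_range] at hi
  refine ⟨1 + i * L, le_add_right le_rfl, ?_, fun w hw hw' hwB => hiB (mem_image.2 ⟨w, hwB, ?_⟩)⟩
  · nlinarith
  · exact Nat.div_eq_of_lt_le (by omega) (by rw [add_one_mul]; omega)

omit [DecidableEq α] in
lemma eq_add_iff_of_eq_add {y d r : ℕ} (h : S y = S (y + r)) (h' : S (y + d) = S (y + d + r)) :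
    S y = S (y + d) ↔ S (y + r) = S (y + r + d) := by
  rw [h, h', add_right_comm]

section Window

variable {d l L r : ℕ} (hper : ∀ z, l ≤ z → z + d < l + L → S z = S (z + d)) (hrd : r + d ≤ L)
include hper hrd

lemma mem_of_lowRunEnd (hlx : l + d ≤ x + 1) :
    ∀ z ∈ (mismatches S x d).filter (· < l), z + r ∉ (mismatches S x d).filter (· < l) →
      z ∈ mismatches S x r ∪ (mismatches S x r).image (· - d) := by
  intro z hz hend
  simp only [mem_filter, mem_mismatches] at hz hend
  by_contra hC
  have h₁ : S z = S (z + r) := by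
    by_contra h
    exact hC (mem_union_left _ (mem_mismatches S |>.2 ⟨⟨by omega, by omega⟩, h⟩))
  have h₂ : S (z + d) = S (z + d + r) := by
    by_contra h
    exact hC (mem_union_right _ (mem_image.2
      ⟨z + d, mem_mismatches S |>.2 ⟨⟨by omega, by omega⟩, h⟩, by omega⟩))
  have h₃ : S (z + r) = S (z + r + d) := by
    rcases lt_or_ge (z + r) l with h | h
    · by_contra h'
      exact hend ⟨⟨⟨by omega, by omega⟩, h'⟩, h⟩
    · exact hper _ h (by omega)
  exact hz.1.2 ((eq_add_iff_of_eq_add S h₁ h₂).2 h₃)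

lemma mem_of_highRunStart (hl : 1 ≤ l) (hdr : d ≤ r) :
    ∀ z ∈ (mismatches S x d).filter (l ≤ ·),
      (∀ y ∈ (mismatches S x d).filter (l ≤ ·), y + r ≠ z) →
      z ∈ (mismatches S x r).image (· + r) ∪ (mismatches S x r).image (· + r - d) := by
  intro z hz hstart
  simp only [mem_filter, mem_mismatches] at hz
  have hzL : l + L ≤ z + d := by
    by_contra h
    exact hz.1.2 (hper z hz.2 (by omega))
  obtain ⟨y, rfl⟩ : ∃ y, z = y + r := ⟨z - r, by omega⟩
  by_contra hC
  have h₁ : S y = S (y + r) := by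
    by_contra h
    exact hC (mem_union_left _ (mem_image.2
      ⟨y, mem_mismatches S |>.2 ⟨⟨by omega, by omega⟩, h⟩, rfl⟩))
  have h₂ : S (y + d) = S (y + d + r) := by
    by_contra h
    exact hC (mem_union_right _ (mem_image.2
      ⟨y + d, mem_mismatches S |>.2 ⟨⟨by omega, by omega⟩, h⟩, by omega⟩))
  have h₃ : S y = S (y + d) := by
    by_contra h
    exact hstart y (mem_filter.2 ⟨mem_mismatches S |>.2 ⟨⟨by omega, by omega⟩, h⟩, by omega⟩) rfl
  exact hz.1.2 ((eq_add_iff_of_eq_add S h₁ h₂).1 h₃)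

end Window

lemma card_union_image_le (B : Finset ℕ) (f : ℕ → ℕ) : #(B ∪ B.image f) ≤ 2 * #B := by
  have := card_union_le B (B.image f)
  have := card_image_le (s := B) (f := f)
  omega

lemma card_image_union_image_le (B : Finset ℕ) (f g : ℕ → ℕ) :
    #(B.image f ∪ B.image g) ≤ 2 * #B := by
  have := card_union_le (B.image f) (B.image g)
  have := card_image_le (s := B) (f := f)
  have := card_image_le (s := B) (f := g)
  omega

theorem hamShift_gcd_le_of_periodic_window (hp : 0 < p) (hpq : p ≤ q) {l : ℕ} (hl : 1 ≤ l)
    (hlx : l + p + q ≤ x + 1)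
    (hper : ∀ z, l ≤ z → z + Nat.gcd p q < l + (p + q) → S z = S (z + Nat.gcd p q))
    (hcard : 2 * hamShift S x q < q / Nat.gcd p q) :
    hamShift S x (Nat.gcd p q) ≤ 2 * (2 * hamShift S x p * (2 * hamShift S x q)) := by
  have hq : 0 < q := by omega
  have hdp : Nat.gcd p q ≤ p := Nat.gcd_le_left q hp
  have hdq : Nat.gcd p q ≤ q := Nat.gcd_le_right p hq
  have hlow : #((mismatches S x (Nat.gcd p q)).filter (· < l)) ≤
      2 * hamShift S x p * (2 * hamShift S x q) :=
    (card_le_mul_card_of_runEnds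
      (Cq := mismatches S x q ∪ (mismatches S x q).image (· - Nat.gcd p q)) hp hq ((card_union_image_le _ _).trans_lt hcard)
      (mem_of_lowRunEnd S hper (r := p) (by omega) (by omega))
      (mem_of_lowRunEnd S hper (r := q) (by omega) (by omega))).trans
    (Nat.mul_le_mul (card_union_image_le _ _) (card_union_image_le _ _))
  have hhigh : #((mismatches S x (Nat.gcd p q)).filter (l ≤ ·)) ≤
      2 * hamShift S x p * (2 * hamShift S x q) :=
    (card_le_mul_card_of_runStarts
      (Cq := (mismatches S x q).image (· + q) ∪ (mismatches S x q).image (· + q - Nat.gcd p q))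
      hp hq ((card_image_union_image_le _ _ _).trans_lt hcard)
      (mem_of_highRunStart S hper (r := p) (by omega) hl hdp)
      (mem_of_highRunStart S hper (r := q) (by omega) hl hdq)).trans
    (Nat.mul_le_mul (card_image_union_image_le _ _ _) (card_image_union_image_le _ _ _))
  rw [← card_mismatches, ← card_filter_add_card_filter_not (· < l)]
  simp only [not_lt]
  omega

end Strings

end HammingShift

open HammingShift

theorem stmt_0_general {α : Type*} [DecidableEq α] (k x : ℕ) (S : ℕ → α)
    (p q : ℕ)
    (hp1 : 1 ≤ p) (hp3 : hamShift S x p ≤ k)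
    (hq2 : q ≤ x / (4 * k + 2)) (hq3 : hamShift S x q ≤ k)
    (hpq : p < q) :
    hamShift S x (Nat.gcd p q) ≤ 16 * k ^ 2 + 1 := by
  have hq : 0 < q := by omega
  have hqx : q * (4 * k + 2) ≤ x := (Nat.le_div_iff_mul_le (by omega)).1 hq2
  rcases le_or_gt (q / Nat.gcd p q) (2 * k) with hsmall | hlarge
  · obtain ⟨T, hT, hreach⟩ := exists_walk_eq_add_gcd hp1 hq
    have hdiv := Nat.div_lt_div_of_lt_of_dvd (Nat.gcd_dvd_right p q) hpq
    rw [Nat.add_div_of_dvd_right (Nat.gcd_dvd_left p q)] at hT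
    have hT4 : T + 2 ≤ 4 * k := by omega
    have := hamShift_gcd_le_of_walk S (x := x) hp1 hpq.le (by nlinarith) hreach
    have := Nat.mul_le_mul (Nat.mul_le_mul_left 2 hT4) (add_le_add hp3 hq3)
    nlinarith
  · have hB : #(mismatches S x p ∪ mismatches S x q) < 2 * k + 1 := by
      have := card_union_le (mismatches S x p) (mismatches S x q)
      rw [card_mismatches, card_mismatches] at this
      omega
    obtain ⟨l, hl, hlx, hclean⟩ := exists_window_disjoint (x := x) _ hB (L := p + q) (by nlinarith)
    have hP : ∀ w, l ≤ w → w < l + q → S w = S (w + p) := fun w hw hw' =>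
      not_not.1 fun h => hclean w hw (by omega)
        (mem_union_left _ ((mem_mismatches S).2 ⟨⟨by omega, by omega⟩, h⟩))
    have hQ : ∀ w, l ≤ w → w < l + p → S w = S (w + q) := fun w hw hw' =>
      not_not.1 fun h => hclean w hw (by omega)
        (mem_union_right _ ((mem_mismatches S).2 ⟨⟨by omega, by omega⟩, h⟩))
    have := hamShift_gcd_le_of_periodic_window S (x := x) hp1 hpq.le hl (by omega)
      (fun z => eq_add_gcd_of_window S hp1 hq hP hQ) (by omega)
    have := Nat.mul_le_mul (Nat.mul_le_mul_left 2 hp3) (Nat.mul_le_mul_left 2 hq3)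
    nlinarith

theorem stmt_0 {α : Type*} [DecidableEq α] (n k x : ℕ) (S : ℕ → α)
    (hk : 1 ≤ k) (hx1 : 1 ≤ x) (hx2 : x ≤ n / 2)
    (p q : ℕ)
    (hp1 : 1 ≤ p) (hp2 : p ≤ x / (4 * k + 2)) (hp3 : hamShift S x p ≤ k)
    (hq1 : 1 ≤ q) (hq2 : q ≤ x / (4 * k + 2)) (hq3 : hamShift S x q ≤ k)
    (hpq : p < q) :
    hamShift S x (Nat.gcd p q) ≤ 16 * k ^ 2 + 1 :=
  stmt_0_general k x S p q hp1 hp3 hq2 hq3 hpq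
end

section
/- Let S be a string of length n, let k ≥ 1, and let x be an integer with 1 ≤ x ≤ n/2. Let p < q be integers with 1 ≤ p, q ≤ x/(4k+2), HAM(S[1,x], S[p+1,p+x]) ≤ k and HAM(S[1,x], S[q+1,q+x]) ≤ k, and let d = gcd(p,q). If additionally q < (2k+1)d, then HAM(S[1,x], S[d+1,d+x]) ≤ 16k² + 1. -/
lemma chainAsc {α : Type*} (S : ℕ → α) (w s : ℕ) :
    ∀ m : ℕ, (∀ j, j < m → S (w + j * s) = S (w + j * s + s)) → S w = S (w + m * s) := by
  intro m
  induction m with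
  | zero => simp
  | succ m ih =>
    intro h
    have h1 := ih (fun j hj => h j (by omega))
    have h2 := h m (by omega)
    have e : w + (m + 1) * s = w + m * s + s := by ring
    rw [e, ← h2]; exact h1

lemma bezoutNat (a b : ℕ) (h : Nat.Coprime a b) (ha : 1 ≤ a) (hb : 2 ≤ b) :
    ∃ u v, 1 ≤ u ∧ u ≤ a ∧ v < b ∧ u * b = v * a + 1 := by
  rcases eq_or_lt_of_le ha with h1 | h1
  · exact ⟨1, b - 1, le_refl _, h1.le, by omega, by rw [← h1]; omega⟩
  · haveI : NeZero a := ⟨by omega⟩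
    set u := ((b : ZMod a)⁻¹).val with hu
    have hua : u < a := ZMod.val_lt _
    clear_value u
    have hbu : (b : ZMod a) * (b : ZMod a)⁻¹ = 1 := ZMod.coe_mul_inv_eq_one b h.symm
    have hub : ((u * b : ℕ) : ZMod a) = ((1 : ℕ) : ZMod a) := by
      push_cast [hu]
      rw [ZMod.natCast_val, ZMod.cast_id, mul_comm]
      exact hbu
    have hmod : u * b % a = 1 % a := (ZMod.natCast_eq_natCast_iff _ _ _).mp hub
    have h1a : 1 % a = 1 := Nat.mod_eq_of_lt h1
    have hu1 : 1 ≤ u := by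
      rcases Nat.eq_zero_or_pos u with h0 | h0
      · exfalso
        rw [h0, zero_mul, Nat.zero_mod, h1a] at hmod
        omega
      · exact h0
    have hub1 : 1 ≤ u * b := Nat.one_le_iff_ne_zero.mpr (by positivity)
    have hdvd : a ∣ u * b - 1 := (Nat.modEq_iff_dvd' hub1).mp hmod.symm
    obtain ⟨v, hv⟩ := hdvd
    have h2 : u * b = v * a + 1 := by
      have e := (Nat.sub_eq_iff_eq_add hub1).mp hv
      rw [e, mul_comm]
    refine ⟨u, v, hu1, hua.le, ?_, h2⟩
    by_contra hcon
    push_neg at hcon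
    have h3 : b * a ≤ v * a := Nat.mul_le_mul_right a hcon
    have h4 : u * b ≤ (a - 1) * b := Nat.mul_le_mul_right b (by omega)
    have h5 : (a - 1) * b + b = a * b := by
      have e : (a - 1) + 1 = a := by omega
      calc (a-1)*b + b = ((a-1)+1)*b := by ring
        _ = a * b := by rw [e]
    nlinarith

set_option maxHeartbeats 1000000 in
theorem stmt_1 {α : Type*} [DecidableEq α] (n k x : ℕ) (S : ℕ → α)
    (hk : 1 ≤ k) (hx1 : 1 ≤ x) (hx2 : x ≤ n / 2)
    (p q d : ℕ)
    (hp1 : 1 ≤ p) (hp2 : p ≤ x / (4 * k + 2)) (hp3 : hamShift S x p ≤ k)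
    (hq1 : 1 ≤ q) (hq2 : q ≤ x / (4 * k + 2)) (hq3 : hamShift S x q ≤ k)
    (hpq : p < q) (hd : d = Nat.gcd p q) (hsmall : q < (2 * k + 1) * d) :
    hamShift S x d ≤ 16 * k ^ 2 + 1 := by
  classical
  have hdp : d ∣ p := hd ▸ Nat.gcd_dvd_left p q
  have hdq : d ∣ q := hd ▸ Nat.gcd_dvd_right p q
  have hd1 : 1 ≤ d := Nat.pos_of_dvd_of_pos hdp hp1
  set a := p / d with ha_def
  set b := q / d with hb_def
  have hpa : a * d = p := Nat.div_mul_cancel hdp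
  have hqb : b * d = q := Nat.div_mul_cancel hdq
  have hcop : Nat.Coprime a b := by
    rw [ha_def, hb_def, hd]
    exact Nat.coprime_div_gcd_div_gcd (hd ▸ hd1)
  have hdplq : d ≤ p := Nat.le_of_dvd hp1 hdp
  have ha1 : 1 ≤ a := (Nat.one_le_div_iff hd1).mpr hdplq
  have hab : a < b := by
    have : a * d < b * d := by rw [hpa, hqb]; exact hpq
    exact Nat.lt_of_mul_lt_mul_right this
  have hb2k : b ≤ 2 * k := by
    have : b * d < (2 * k + 1) * d := by rw [hqb]; exact hsmall
    have := Nat.lt_of_mul_lt_mul_right this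
    omega
  have hb2 : 2 ≤ b := by omega
  have ha2k : a ≤ 2 * k := by omega
  have hq4 : q * (4 * k + 2) ≤ x := (Nat.le_div_iff_mul_le (by omega)).mp hq2
  have haqx : a * q ≤ x :=
    calc a * q ≤ (4 * k + 2) * q := Nat.mul_le_mul_right q (by omega)
      _ = q * (4 * k + 2) := by ring
      _ ≤ x := hq4
  obtain ⟨u, v, hu1, hua, hvb, huv⟩ := bezoutNat a b hcop ha1 hb2
  set u2 := a - u with hu2_def
  set v2 := b - v with hv2_def
  have hu2 : u2 + u = a := by omega
  have hv2 : v2 + v = b := by omega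
  have huvq : u * q = v * p + d := by
    calc u * q = u * b * d := by rw [← hqb]; ring
      _ = (v * a + 1) * d := by rw [huv]
      _ = v * p + d := by rw [← hpa]; ring
  have hbez2 : u2 * b + 1 = v2 * a := by
    have h1 : u2 * b + u * b = a * b := by rw [← hu2]; ring
    have h2 : v2 * a + v * a = a * b := by
      calc v2 * a + v * a = (v2 + v) * a := by ring
        _ = a * b := by rw [hv2]; ring
    linarith [h1, h2, huv]
  have hbq : u2 * q + d = v2 * p := by
    calc u2 * q + d = (u2 * b + 1) * d := by rw [← hqb]; ring
      _ = v2 * a * d := by rw [hbez2]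
      _ = v2 * p := by rw [← hpa]; ring
  -- mismatch sets
  set Mq := (Finset.Icc 1 x).filter (fun z => S z ≠ S (z + q)) with hMq
  set Mp := (Finset.Icc 1 x).filter (fun z => S z ≠ S (z + p)) with hMp
  have hMqk : Mq.card ≤ k := hq3
  have hMpk : Mp.card ≤ k := hp3
  set T1 := (Finset.range u).biUnion (fun j => Mq.image (fun w => w - j * q)) with hT1
  set T2 := (Finset.range v).biUnion (fun j => Mp.image (fun w => w - (j * p + d))) with hT2
  set T3 := (Finset.range u2).biUnion (fun j => Mq.image (fun w => w + (u2 - j) * q)) with hT3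
  set T4 := (Finset.range v2).biUnion (fun j => Mp.image (fun w => w + (u2 * q - j * p))) with hT4
  have hsub : (Finset.Icc 1 x).filter (fun z => S z ≠ S (z + d)) ⊆ (T1 ∪ T2) ∪ (T3 ∪ T4) := by
    intro z hz
    rw [Finset.mem_filter, Finset.mem_Icc] at hz
    obtain ⟨⟨hz1, hz2⟩, hzd⟩ := hz
    rcases le_or_gt (z + u * q) (x + 1) with hcA | hcA
    · -- forward case
      have hkey : (∃ j, j < u ∧ S (z + j * q) ≠ S (z + j * q + q)) ∨
          (∃ j, j < v ∧ S (z + d + j * p) ≠ S (z + d + j * p + p)) := by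
        by_contra hcon
        push_neg at hcon
        obtain ⟨hc1, hc2⟩ := hcon
        have e1 : S z = S (z + u * q) := chainAsc S z q u hc1
        have e2 : S (z + d) = S (z + d + v * p) := chainAsc S (z + d) p v hc2
        have e3 : z + u * q = z + d + v * p := by rw [huvq]; ring
        rw [e3] at e1
        exact hzd (e1.trans e2.symm)
      rcases hkey with ⟨j, hj, hne⟩ | ⟨j, hj, hne⟩
      · -- z ∈ T1
        have hwx : z + j * q + q ≤ x + 1 := by
          calc z + j * q + q = z + (j + 1) * q := by ring
            _ ≤ z + u * q := by gcongr <;> omega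
            _ ≤ x + 1 := hcA
        have hwx' : z + j * q ≤ x := by
          have : z + j * q + 1 ≤ z + j * q + q := by omega
          omega
        have hwm : z + j * q ∈ Mq := by
          rw [hMq, Finset.mem_filter, Finset.mem_Icc]
          exact ⟨⟨by omega, hwx'⟩, hne⟩
        refine Finset.mem_union_left _ (Finset.mem_union_left _ ?_)
        rw [hT1, Finset.mem_biUnion]
        refine ⟨j, Finset.mem_range.mpr hj, ?_⟩
        have : (z + j * q) - j * q = z := by omega
        exact this ▸ Finset.mem_image_of_mem _ hwm
      · -- z ∈ T2
        have hwx : z + d + j * p + p ≤ x + 1 := by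
          calc z + d + j * p + p = z + (d + (j + 1) * p) := by ring
            _ ≤ z + (d + v * p) := by gcongr <;> omega
            _ = z + u * q := by rw [huvq]; ring
            _ ≤ x + 1 := hcA
        have hwx' : z + d + j * p ≤ x := by
          have : z + d + j * p + 1 ≤ z + d + j * p + p := by omega
          omega
        have hwm : z + d + j * p ∈ Mp := by
          rw [hMp, Finset.mem_filter, Finset.mem_Icc]
          exact ⟨⟨by omega, hwx'⟩, hne⟩
        refine Finset.mem_union_left _ (Finset.mem_union_right _ ?_)
        rw [hT2, Finset.mem_biUnion]
        refine ⟨j, Finset.mem_range.mpr hj, ?_⟩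
        have : (z + d + j * p) - (j * p + d) = z := by omega
        exact this ▸ Finset.mem_image_of_mem _ hwm
    · -- backward case
      have hzB : u2 * q + 1 ≤ z := by
        by_contra hcon
        push_neg at hcon
        have h1 : x + 2 ≤ z + u * q := hcA
        have h2 : z + u * q ≤ u2 * q + u * q := by
          have hz' : z ≤ u2 * q := by omega
          omega
        have h3 : u2 * q + u * q = a * q := by rw [← hu2]; ring
        have : x + 2 ≤ x := by
          calc x + 2 ≤ z + u * q := h1
            _ ≤ u2 * q + u * q := h2
            _ = a * q := h3
            _ ≤ x := haqx
        omega
      set w0 := z - u2 * q with hw0_def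
      have hw0 : w0 + u2 * q = z := Nat.sub_add_cancel (by omega)
      have hw01 : 1 ≤ w0 := by omega
      have hkey : (∃ j, j < u2 ∧ S (w0 + j * q) ≠ S (w0 + j * q + q)) ∨
          (∃ j, j < v2 ∧ S (w0 + j * p) ≠ S (w0 + j * p + p)) := by
        by_contra hcon
        push_neg at hcon
        obtain ⟨hc1, hc2⟩ := hcon
        have e1 : S w0 = S (w0 + u2 * q) := chainAsc S w0 q u2 hc1
        have e2 : S w0 = S (w0 + v2 * p) := chainAsc S w0 p v2 hc2
        have e3 : w0 + v2 * p = z + d := by rw [← hbq, ← add_assoc, hw0]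
        rw [hw0] at e1
        rw [e3] at e2
        exact hzd (e1.symm.trans e2)
      rcases hkey with ⟨j, hj, hne⟩ | ⟨j, hj, hne⟩
      · -- z ∈ T3
        have hwq : w0 + j * q + q ≤ z := by
          calc w0 + j * q + q = w0 + (j + 1) * q := by ring
            _ ≤ w0 + u2 * q := by gcongr <;> omega
            _ = z := hw0
        have hwx : w0 + j * q ≤ x := by omega
        have hwm : w0 + j * q ∈ Mq := by
          rw [hMq, Finset.mem_filter, Finset.mem_Icc]
          exact ⟨⟨by omega, hwx⟩, hne⟩
        refine Finset.mem_union_right _ (Finset.mem_union_left _ ?_)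
        rw [hT3, Finset.mem_biUnion]
        refine ⟨j, Finset.mem_range.mpr hj, ?_⟩
        have : (w0 + j * q) + (u2 - j) * q = z := by
          calc w0 + j * q + (u2 - j) * q = w0 + (j + (u2 - j)) * q := by ring
            _ = w0 + u2 * q := by congr 2; omega
            _ = z := hw0
        exact this ▸ Finset.mem_image_of_mem _ hwm
      · -- z ∈ T4
        have hjp : j * p + p ≤ u2 * q + d := by
          calc j * p + p = (j + 1) * p := by ring
            _ ≤ v2 * p := by gcongr <;> omega
            _ = u2 * q + d := hbq.symm
        have hjp2 : j * p ≤ u2 * q := by omega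
        have hwp : w0 + j * p + p ≤ z + d := by
          calc w0 + j * p + p ≤ w0 + (u2 * q + d) := by omega
            _ = z + d := by rw [← add_assoc, hw0]
        have hwx : w0 + j * p ≤ x := by omega
        have hwm : w0 + j * p ∈ Mp := by
          rw [hMp, Finset.mem_filter, Finset.mem_Icc]
          exact ⟨⟨by omega, hwx⟩, hne⟩
        refine Finset.mem_union_right _ (Finset.mem_union_right _ ?_)
        rw [hT4, Finset.mem_biUnion]
        refine ⟨j, Finset.mem_range.mpr hj, ?_⟩
        have : (w0 + j * p) + (u2 * q - j * p) = z := by omega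
        exact this ▸ Finset.mem_image_of_mem _ hwm
  -- counting
  have hcard : ∀ (m : ℕ) (M : Finset ℕ) (f : ℕ → ℕ → ℕ),
      ((Finset.range m).biUnion (fun j => M.image (f j))).card ≤ m * M.card := by
    intro m M f
    calc ((Finset.range m).biUnion (fun j => M.image (f j))).card
        ≤ ∑ j ∈ Finset.range m, (M.image (f j)).card := Finset.card_biUnion_le
      _ ≤ ∑ j ∈ Finset.range m, M.card :=
          Finset.sum_le_sum (fun j _ => Finset.card_image_le)
      _ = m * M.card := by simp [Finset.sum_const, mul_comm]
  have hT1c : T1.card ≤ u * k :=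
    le_trans (hcard u Mq _) (Nat.mul_le_mul_left u hMqk)
  have hT2c : T2.card ≤ v * k :=
    le_trans (hcard v Mp _) (Nat.mul_le_mul_left v hMpk)
  have hT3c : T3.card ≤ u2 * k :=
    le_trans (hcard u2 Mq _) (Nat.mul_le_mul_left u2 hMqk)
  have hT4c : T4.card ≤ v2 * k :=
    le_trans (hcard v2 Mp _) (Nat.mul_le_mul_left v2 hMpk)
  have hfinal : hamShift S x d ≤ u * k + v * k + (u2 * k + v2 * k) := by
    unfold hamShift
    calc ((Finset.Icc 1 x).filter fun z => S z ≠ S (z + d)).card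
        ≤ ((T1 ∪ T2) ∪ (T3 ∪ T4)).card := Finset.card_le_card hsub
      _ ≤ (T1 ∪ T2).card + (T3 ∪ T4).card := Finset.card_union_le _ _
      _ ≤ (T1.card + T2.card) + (T3.card + T4.card) := by
          gcongr <;> exact Finset.card_union_le _ _
      _ ≤ u * k + v * k + (u2 * k + v2 * k) := by gcongr
  have hu2a : u2 ≤ a := by omega
  have hv2b : v2 ≤ b := by omega
  have hfin2 : u * k + v * k + (u2 * k + v2 * k) ≤ 16 * k ^ 2 + 1 := by
    have h1 : u * k ≤ 2 * k * k := Nat.mul_le_mul_right k (by omega)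
    have h2 : v * k ≤ 2 * k * k := Nat.mul_le_mul_right k (by omega)
    have h3 : u2 * k ≤ 2 * k * k := Nat.mul_le_mul_right k (by omega)
    have h4 : v2 * k ≤ 2 * k * k := Nat.mul_le_mul_right k (by omega)
    have h5 : 16 * k ^ 2 = 16 * (k * k) := by ring
    rw [h5]
    linarith
  exact le_trans hfinal hfin2
end

section
/- Let S be a string of length n, let k ≥ 1 and m ≥ 2, and let x be an integer with 1 ≤ x ≤ n/2. Define I = { i : 1 ≤ i ≤ x/(2(mk+1)) and HAM(S[1,x], S[i+1,i+x]) ≤ k }. Then for any p₁, …, p_m ∈ I, their greatest common divisor d = gcd(p₁, …, p_m) satisfies HAM(S[1,x], S[d+1,d+x]) ≤ 8mk² + 1. -/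
open Finset

theorem Nat.exists_modEq_mem_Ico (a z : ℕ) {P : ℕ} (hP : 0 < P) :
    ∃ w, a ≤ w ∧ w < a + P ∧ w ≡ z [MOD P] := by
  refine ⟨a + (z + P - a % P) % P, by omega,
    by have := Nat.mod_lt (z + P - a % P) hP; omega, ?_⟩
  calc a + (z + P - a % P) % P ≡ a % P + (z + P - a % P) [MOD P] :=
        (Nat.mod_modEq a P).symm.add (Nat.mod_modEq _ P)
    _ = z + P := by have := Nat.mod_lt a hP; omega
    _ ≡ z [MOD P] := Nat.add_modEq_right

theorem Nat.card_filter_modEq_Ico_le_two (l r : ℕ) {P : ℕ} (hP : 0 < P) :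
    ((Ico l (l + 2 * P)).filter (· ≡ r [MOD P])).card ≤ 2 := by
  calc _ ≤ (range 2).card := card_le_card_of_injOn (fun z => (z - l) / P) ?_ ?_
    _ = 2 := card_range 2
  · intro z hz
    simp only [coe_filter, mem_Ico, Set.mem_ofPred_eq, coe_range, Set.mem_Iio] at hz ⊢
    exact (Nat.div_lt_iff_lt_mul hP).2 (by omega)
  · intro z hz z' hz' hq
    simp only [coe_filter, mem_Ico, Set.mem_ofPred_eq] at hz hz' hq
    have hr : (z - l) % P = (z' - l) % P := Nat.ModEq.add_left_cancel' l <| by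
      rw [Nat.add_sub_cancel' hz.1.1, Nat.add_sub_cancel' hz'.1.1]
      exact hz.2.trans hz'.2.symm
    have := Nat.div_add_mod (z - l) P
    have := Nat.div_add_mod (z' - l) P
    rw [hq] at *
    omega

theorem Nat.finset_gcd_le_of_forall_le {ι : Type*} {s : Finset ι} {p : ι → ℕ} {P : ℕ}
    (h : ∀ i ∈ s, p i ≤ P) : s.gcd p ≤ P := by
  by_cases hzero : ∀ i ∈ s, p i = 0
  · rw [Finset.gcd_eq_zero_iff.2 hzero]
    exact Nat.zero_le P
  · obtain ⟨i, hi, hpi⟩ : ∃ i ∈ s, p i ≠ 0 := by simpa using hzero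
    exact (Nat.le_of_dvd (Nat.pos_of_ne_zero hpi) (Finset.gcd_dvd hi)).trans (h i hi)

theorem exists_Ico_forall_notMem (M : Finset ℕ) (L x : ℕ) (h : (M.card + 1) * L ≤ x) :
    ∃ a, 1 ≤ a ∧ a + L ≤ x + 1 ∧ ∀ z, a ≤ z → z < a + L → z ∉ M := by
  by_contra! hcover
  have hsub : range (M.card + 1) ⊆ M.image fun b => (b - 1) / L := by
    intro j hj
    have hj := mem_range.1 hj
    have hjL : L * j + L ≤ x := by nlinarith
    obtain ⟨z, hz1, hz2, hzM⟩ := hcover (L * j + 1) (by omega) (by omega)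
    exact mem_image.2 ⟨z, hzM, Nat.div_eq_of_lt_le (by rw [mul_comm]; omega)
      (by rw [add_one_mul, mul_comm]; omega)⟩
  simpa using (card_le_card hsub).trans card_image_le

theorem card_le_of_forall_exists_modEq_of_exists_near (D C N : Finset ℕ) {P : ℕ}
    (hP : 0 < P) (hC : ∀ z ∈ D, ∃ c ∈ C, c ≡ z [MOD P])
    (hN : ∀ z ∈ D, ∃ b ∈ N, z ≤ b ∧ b < z + 2 * P) :
    D.card ≤ C.card * N.card * 2 := by
  have hsub : D ⊆ (C ×ˢ N).biUnion fun cb =>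
      (Ico (cb.2 + 1 - 2 * P) (cb.2 + 1 - 2 * P + 2 * P)).filter (· ≡ cb.1 [MOD P]) := by
    intro z hz
    obtain ⟨c, hc, hcz⟩ := hC z hz
    obtain ⟨b, hb, hzb, hbz⟩ := hN z hz
    exact mem_biUnion.2 ⟨(c, b), mem_product.2 ⟨hc, hb⟩,
      mem_filter.2 ⟨mem_Ico.2 ⟨by omega, by omega⟩, hcz.symm⟩⟩
  calc D.card ≤ _ := card_le_card hsub
    _ ≤ (C ×ˢ N).card * 2 :=
        card_biUnion_le_card_mul _ _ _ fun _ _ => Nat.card_filter_modEq_Ico_le_two _ _ hP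
    _ = C.card * N.card * 2 := by rw [card_product]

def HasPeriodOn {α : Type*} (S : ℕ → α) (u N p : ℕ) : Prop :=
  ∀ z, u ≤ z → z + p ≤ N → S z = S (z + p)

namespace HasPeriodOn

variable {α : Type*} {S : ℕ → α} {u N P : ℕ}

theorem tsub {s t : ℕ} (hst : s ≤ t) (hlen : u + s + t ≤ N + 1)
    (hs : HasPeriodOn S u N s) (ht : HasPeriodOn S u N t) : HasPeriodOn S u N (t - s) := by
  intro z hz hzN
  by_cases hback : u + s ≤ z
  · have h₁ := hs (z - s) (by omega) (by omega)
    have h₂ := ht (z - s) (by omega) (by omega)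
    rw [Nat.sub_add_cancel (by omega)] at h₁
    rw [show z - s + t = z + (t - s) by omega] at h₂
    exact h₁.symm.trans h₂
  · have h₁ := hs (z + (t - s)) (by omega) (by omega)
    rw [show z + (t - s) + s = z + t by omega] at h₁
    exact (ht z hz (by omega)).trans h₁.symm

theorem gcd (hlen : u + 2 * P ≤ N + 1) {s t : ℕ} (hs : s ≤ P) (ht : t ≤ P)
    (hps : HasPeriodOn S u N s) (hpt : HasPeriodOn S u N t) :
    HasPeriodOn S u N (Nat.gcd s t) := by
  induction hn : s + t using Nat.strong_induction_on generalizing s t with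
  | _ n ih =>
  rcases Nat.eq_zero_or_pos s with rfl | hs₀
  · simpa using hpt
  rcases Nat.eq_zero_or_pos t with rfl | ht₀
  · simpa using hps
  rcases le_total s t with hst | hts
  · rw [← Nat.gcd_sub_self_right hst]
    exact ih _ (by omega) hs (by omega) hps (hps.tsub hst (by omega) hpt) rfl
  · rw [← Nat.gcd_sub_self_left hts]
    exact ih _ (by omega) (by omega) ht (hpt.tsub hts (by omega) hps) hpt rfl

theorem finset_gcd {ι : Type*} [DecidableEq ι] (hlen : u + 2 * P ≤ N + 1) {p : ι → ℕ}
    (s : Finset ι) (hle : ∀ i ∈ s, p i ≤ P) (hper : ∀ i ∈ s, HasPeriodOn S u N (p i)) :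
    HasPeriodOn S u N (s.gcd p) := by
  induction s using Finset.induction_on with
  | empty => intro z _ _; simp
  | insert i s _ ih =>
    rw [gcd_insert]
    exact HasPeriodOn.gcd hlen (hle i (mem_insert_self i s))
      (Nat.finset_gcd_le_of_forall_le fun j hj => hle j (mem_insert_of_mem hj))
      (hper i (mem_insert_self i s))
      (ih (fun j hj => hle j (mem_insert_of_mem hj)) fun j hj => hper j (mem_insert_of_mem hj))

end HasPeriodOn

section Mismatches

variable {α : Type*} [DecidableEq α] {S : ℕ → α} {x : ℕ}

variable (S x) in
def mismatches (i : ℕ) : Finset ℕ :=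
  (Icc 1 x).filter fun z => S z ≠ S (z + i)

theorem mem_mismatches {i z : ℕ} :
    z ∈ mismatches S x i ↔ (1 ≤ z ∧ z ≤ x) ∧ S z ≠ S (z + i) := by
  rw [mismatches, mem_filter, mem_Icc]

theorem eq_of_notMem_mismatches {i z : ℕ} (hz : 1 ≤ z) (hzx : z ≤ x)
    (h : z ∉ mismatches S x i) : S z = S (z + i) := by
  by_contra hne
  exact h (mem_mismatches.2 ⟨⟨hz, hzx⟩, hne⟩)

variable (S x) in
theorem card_union_le_two_mul_card_mismatches (P d : ℕ) :
    (mismatches S x P ∪ (mismatches S x P).image (· - d)).card ≤ 2 * hamShift S x P := by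
  rw [two_mul]
  exact (card_union_le _ _).trans (Nat.add_le_add_left card_image_le _)

theorem hasPeriodOn_gcd_of_notMem_biUnion {ι : Type*} [DecidableEq ι] (s : Finset ι)
    {p : ι → ℕ} {P u : ℕ} (hp : ∀ i ∈ s, 1 ≤ p i ∧ p i ≤ P) (hu : 1 ≤ u)
    (hux : u + 2 * P ≤ x + 1)
    (hclean : ∀ z, u ≤ z → z < u + 2 * P → z ∉ s.biUnion fun i => mismatches S x (p i)) :
    HasPeriodOn S u (u + 2 * P) (s.gcd p) := by
  refine HasPeriodOn.finset_gcd (by omega) s (fun i hi => (hp i hi).2) fun i hi z hz hzN => ?_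
  have hpi := (hp i hi).1
  have hzM := hclean z hz (by omega)
  exact eq_of_notMem_mismatches (by omega) (by omega)
    fun h => hzM (mem_biUnion.2 ⟨i, hi, h⟩)

theorem exists_near_of_mem_mismatches {M : Finset ℕ} {d L z : ℕ}
    (hloc : ∀ u, 1 ≤ u → u + L ≤ x + 1 → (∀ b, u ≤ b → b < u + L → b ∉ M) →
      HasPeriodOn S u (u + L) d)
    (hdL : d ≤ L) (hz : z ∈ mismatches S x d) :
    ∃ b ∈ insert x M, z ≤ b ∧ b < z + L := by
  obtain ⟨⟨hz₁, hzx⟩, hne⟩ := mem_mismatches.1 hz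
  by_contra! hfar
  have hzL : z + L ≤ x := hfar x (mem_insert_self x M) hzx
  exact hne (hloc z hz₁ (by omega)
    (fun b hzb hb hbM => (hfar b (mem_insert_of_mem hbM) hzb).not_gt hb) z le_rfl (by omega))

theorem eq_add_iff_of_notMem_mismatches {d P z : ℕ} (hz : 1 ≤ z) (hzx : z + d ≤ x)
    (h₀ : z ∉ mismatches S x P) (h₁ : z + d ∉ mismatches S x P) :
    S (z + P) = S (z + P + d) ↔ S z = S (z + d) := by
  rw [eq_of_notMem_mismatches hz (by omega) h₀, eq_of_notMem_mismatches (by omega) hzx h₁,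
    add_right_comm z d P]

theorem eq_add_iff_of_modEq {d P y z : ℕ} (hdP : d ≤ P) (hy : 1 ≤ y) (hzx : z ≤ x)
    (hyz : y ≤ z) (hmod : y ≡ z [MOD P])
    (hclass : ∀ w, w ≡ y [MOD P] → w ∉ mismatches S x P ∧ w + d ∉ mismatches S x P) :
    S z = S (z + d) ↔ S y = S (y + d) := by
  obtain ⟨j, rfl⟩ : ∃ j, z = y + P * j := by
    obtain ⟨j, hj⟩ := (Nat.modEq_iff_dvd' hyz).1 hmod
    exact ⟨j, by omega⟩
  clear hmod hyz
  induction j with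
  | zero => simp
  | succ j ih =>
    rw [mul_add_one, ← add_assoc] at hzx ⊢
    have hw : y + P * j ≡ y [MOD P] := Nat.add_modulus_mul_modEq_iff.2 rfl
    rw [eq_add_iff_of_notMem_mismatches (by omega) (by omega) (hclass _ hw).1 (hclass _ hw).2]
    exact ih (by omega)

theorem exists_modEq_of_mem_mismatches {d P a z : ℕ} (hP : 0 < P) (hdP : d ≤ P) (ha : 1 ≤ a)
    (hax : a + P ≤ x + 1) (hwin : ∀ w, a ≤ w → w < a + P → S w = S (w + d))
    (hz : z ∈ mismatches S x d) :
    ∃ c ∈ mismatches S x P ∪ (mismatches S x P).image (· - d), c ≡ z [MOD P] := by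
  obtain ⟨⟨hz₁, hzx⟩, hne⟩ := mem_mismatches.1 hz
  by_contra! hC
  have hclass : ∀ w, w ≡ z [MOD P] → w ∉ mismatches S x P ∧ w + d ∉ mismatches S x P :=
    fun w hw => ⟨fun h => hC w (mem_union_left _ h) hw,
      fun h => hC w (mem_union_right _ (mem_image.2 ⟨w + d, h, by simp⟩)) hw⟩
  obtain ⟨w, haw, hwa, hwz⟩ := Nat.exists_modEq_mem_Ico a z hP
  rcases le_total w z with hle | hle
  · exact hne ((eq_add_iff_of_modEq hdP (by omega) hzx hle hwz
      fun v hv => hclass v (hv.trans hwz)).2 (hwin w haw hwa))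
  · exact hne ((eq_add_iff_of_modEq hdP hz₁ (by omega) hle hwz.symm hclass).1 (hwin w haw hwa))

end Mismatches

theorem stmt_3_general {α : Type*} [DecidableEq α] (k m x : ℕ) (S : ℕ → α)
    (hm : 2 ≤ m)
    (p : Fin m → ℕ)
    (hp1 : ∀ i, 1 ≤ p i)
    (hp2 : ∀ i, p i ≤ x / (2 * (m * k + 1)))
    (hp3 : ∀ i, hamShift S x (p i) ≤ k)
    (d : ℕ) (hd : d = Finset.univ.gcd p) :
    hamShift S x d ≤ 8 * m * k ^ 2 + 1 := by
  obtain ⟨i₀, -, hi₀⟩ := exists_max_image univ p ⟨⟨0, by omega⟩, mem_univ _⟩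
  set P := p i₀
  have hP : 0 < P := hp1 i₀
  have hPx : P * (2 * (m * k + 1)) ≤ x := (Nat.le_div_iff_mul_le (by positivity)).1 (hp2 i₀)
  have hdP : d ≤ P := hd ▸ Nat.le_of_dvd hP (Finset.gcd_dvd (mem_univ i₀))
  set M := univ.biUnion fun i => mismatches S x (p i)
  have hM : M.card ≤ m * k := (card_biUnion_le_card_mul _ _ _ fun i _ => hp3 i).trans (by simp)
  have hloc : ∀ u, 1 ≤ u → u + 2 * P ≤ x + 1 →
      (∀ z, u ≤ z → z < u + 2 * P → z ∉ M) → HasPeriodOn S u (u + 2 * P) d :=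
    fun _ hu hux hclean => hd ▸ hasPeriodOn_gcd_of_notMem_biUnion univ
      (fun i _ => ⟨hp1 i, hi₀ i (mem_univ i)⟩) hu hux hclean
  obtain ⟨a, ha, hax, hclean⟩ := exists_Ico_forall_notMem M (2 * P) x (by nlinarith)
  set C := mismatches S x P ∪ (mismatches S x P).image (· - d)
  have hC : C.card ≤ 2 * k :=
    (card_union_le_two_mul_card_mismatches S x P d).trans (Nat.mul_le_mul_left 2 (hp3 i₀))
  calc hamShift S x d ≤ C.card * (insert x M).card * 2 :=
        card_le_of_forall_exists_modEq_of_exists_near _ _ _ hP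
          (fun z hz => exists_modEq_of_mem_mismatches hP hdP ha (by omega)
            (fun w haw hwa => hloc a ha hax hclean w haw (by omega)) hz)
          fun z hz => exists_near_of_mem_mismatches hloc (by omega) hz
    _ ≤ 2 * k * (m * k + 1) * 2 := by
        gcongr
        exact (card_insert_le _ _).trans (by omega)
    _ ≤ 8 * m * k ^ 2 + 1 := by nlinarith

theorem stmt_3 {α : Type*} [DecidableEq α] (n k m x : ℕ) (S : ℕ → α)
    (hk : 1 ≤ k) (hm : 2 ≤ m) (hx1 : 1 ≤ x) (hx2 : x ≤ n / 2)
    (p : Fin m → ℕ)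
    (hp1 : ∀ i, 1 ≤ p i)
    (hp2 : ∀ i, p i ≤ x / (2 * (m * k + 1)))
    (hp3 : ∀ i, hamShift S x (p i) ≤ k)
    (d : ℕ) (hd : d = Finset.univ.gcd p) :
    hamShift S x d ≤ 8 * m * k ^ 2 + 1 :=
  stmt_3_general k m x S hm p hp1 hp2 hp3 d hd
end

section
/- Let p < q be positive integers with d = gcd(p,q), and let S be a string. Suppose an interval of positions [a, a + p + q − 1] of length p + q contains positions i and i + d with S[i] ≠ S[i+d]. Then there exists a position j such that either both j and j + p lie in [a, a + p + q − 1] and S[j] ≠ S[j+p], or both j and j + q lie in [a, a + p + q − 1] and S[j] ≠ S[j+q]. -/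
lemma fw_aux {α : Type*} : ∀ N p q, p + q = N → 0 < p → p ≤ q → ∀ T : ℕ → α,
    (∀ k, k + p < p + q → T k = T (k + p)) →
    (∀ k, k + q < p + q → T k = T (k + q)) →
    ∀ k, k + Nat.gcd p q < p + q → T k = T (k + Nat.gcd p q) := by
  intro N
  induction N using Nat.strong_induction_on with
  | _ N IH =>
    intro p q hN hp hle T hP hQ k hk
    rcases eq_or_lt_of_le hle with heq | hlt
    · subst heq; rw [Nat.gcd_self]
      exact hP k (by have := Nat.gcd_self p; omega)
    · set r := q - p with hr
      have hr0 : 0 < r := by omega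
      have hgr : Nat.gcd p r = Nat.gcd p q := Nat.gcd_sub_self_right hle
      have hP' : ∀ k, k + p < p + r → T k = T (k + p) := fun k h => hP k (by omega)
      have hR : ∀ k, k + r < p + r → T k = T (k + r) := by
        intro k h
        have h1 : T k = T (k + q) := hQ k (by omega)
        have h2 : T (k + r) = T (k + r + p) := hP (k + r) (by omega)
        rw [h1, h2]; congr 1; omega
      have key : ∀ k, k + Nat.gcd p q < q → T k = T (k + Nat.gcd p q) := by
        rcases le_or_gt p r with hpr | hrp
        · have h5 := IH (p + r) (by omega) p r rfl hp hpr T hP' hR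
          intro k h; rw [← hgr]; exact h5 k (by rw [hgr]; omega)
        · have hR' : ∀ k, k + r < r + p → T k = T (k + r) := fun k h => hR k (by omega)
          have hP'' : ∀ k, k + p < r + p → T k = T (k + p) := fun k h => hP' k (by omega)
          have h5 := IH (r + p) (by omega) r p rfl hr0 (le_of_lt hrp) T hR' hP''
          intro k h
          have hc : Nat.gcd r p = Nat.gcd p q := by rw [Nat.gcd_comm, hgr]
          rw [← hc]; exact h5 k (by rw [hc]; omega)
      set d := Nat.gcd p q with hdd
      have hdr : d ∣ r := Nat.dvd_sub (Nat.gcd_dvd_right p q) (Nat.gcd_dvd_left p q)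
      have hdle : d ≤ r := Nat.le_of_dvd hr0 hdr
      by_cases hkq : k + d < q
      · exact key k hkq
      · have hkp : p ≤ k := by omega
        have e1 : T (k - p) = T (k - p + p) := hP (k - p) (by omega)
        have e2 : T (k - p) = T (k - p + d) := key (k - p) (by omega)
        have e3 : T (k - p + d) = T (k - p + d + p) := hP (k - p + d) (by omega)
        have e4 : k - p + p = k := by omega
        have e5 : k - p + d + p = k + d := by omega
        calc T k = T (k - p) := by rw [e1, e4]
          _ = T (k - p + d) := e2
          _ = T (k + d) := by rw [e3, e5]

theorem stmt_6 {α : Type*} (p q d : ℕ) (hp : 0 < p) (hpq : p < q)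
    (hd : d = Nat.gcd p q) (S : ℕ → α) (a i : ℕ) (ha : 1 ≤ a)
    (hi1 : a ≤ i) (hi2 : i + d ≤ a + p + q - 1)
    (hmis : S i ≠ S (i + d)) :
    ∃ j, (a ≤ j ∧ j + p ≤ a + p + q - 1 ∧ S j ≠ S (j + p)) ∨
         (a ≤ j ∧ j + q ≤ a + p + q - 1 ∧ S j ≠ S (j + q)) := by
  by_contra h
  push_neg at h
  set T : ℕ → α := fun k => S (a + k) with hT
  have hP : ∀ k, k + p < p + q → T k = T (k + p) := by
    intro k hk
    have h1 := (h (a + k)).1 (by omega) (by omega)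
    simp only [hT]
    rw [show a + (k + p) = a + k + p by omega]
    exact h1
  have hQ : ∀ k, k + q < p + q → T k = T (k + q) := by
    intro k hk
    have h1 := (h (a + k)).2 (by omega) (by omega)
    simp only [hT]
    rw [show a + (k + q) = a + k + q by omega]
    exact h1
  have hfw := fw_aux (p + q) p q rfl hp (le_of_lt hpq) T hP hQ (i - a) (by omega)
  apply hmis
  have e1 : a + (i - a) = i := by omega
  have e2 : a + (i - a + Nat.gcd p q) = i + d := by omega
  simpa only [hT, e1, e2] using hfw
end

section
/- Let n be even, let S be a string of length n, let P = S[1, n/2] be its prefix of length n/2, and let k ≥ 1. Let p be the smallest 2k-period of P. Then any two distinct indices i < i′ with 0 ≤ i, i′ ≤ n/2, HAM(P, S[i+1, i+n/2]) ≤ k and HAM(P, S[i′+1, i′+n/2]) ≤ k satisfy i′ − i ≥ p. -/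
theorem stmt_9 {α : Type*} [DecidableEq α] (n k : ℕ) (S : ℕ → α)
    (hn : 2 ∣ n) (hk : 1 ≤ k)
    (p : ℕ) (hp1 : 1 ≤ p) (hp2 : p ≤ n / 2)
    (hp3 : ((Finset.Icc 1 (n / 2 - p)).filter (fun z => S z ≠ S (z + p))).card ≤ 2 * k)
    (hpmin : ∀ p', 1 ≤ p' → p' ≤ n / 2 →
      ((Finset.Icc 1 (n / 2 - p')).filter (fun z => S z ≠ S (z + p'))).card ≤ 2 * k →
      p ≤ p')
    (i i' : ℕ) (hii' : i < i') (hi' : i' ≤ n / 2)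
    (hi : ((Finset.Icc 1 (n / 2)).filter (fun z => S z ≠ S (z + i))).card ≤ k)
    (hi'2 : ((Finset.Icc 1 (n / 2)).filter (fun z => S z ≠ S (z + i'))).card ≤ k) :
    p ≤ i' - i := by
  set q := i' - i with hq
  have hq1 : 1 ≤ q := by omega
  have hq2 : q ≤ n / 2 := by omega
  apply hpmin q hq1 hq2
  set A := (Finset.Icc 1 (n / 2)).filter (fun z => S z ≠ S (z + i')) with hA
  set B := (Finset.Icc 1 (n / 2)).filter (fun z => S z ≠ S (z + i)) with hB
  have hsub : (Finset.Icc 1 (n / 2 - q)).filter (fun z => S z ≠ S (z + q)) ⊆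
      A ∪ B.image (fun z => z - q) := by
    intro z hz
    simp only [Finset.mem_filter, Finset.mem_Icc] at hz
    obtain ⟨⟨hz1, hz2⟩, hz3⟩ := hz
    by_cases h : S z = S (z + i')
    · have hzq : z + q + i = z + i' := by omega
      have : S (z + q) ≠ S (z + q + i) := by rw [hzq, ← h]; exact fun e => hz3 e.symm
      apply Finset.mem_union_right
      apply Finset.mem_image.2
      refine ⟨z + q, ?_, by omega⟩
      simp only [hB, Finset.mem_filter, Finset.mem_Icc]
      exact ⟨⟨by omega, by omega⟩, this⟩
    · apply Finset.mem_union_left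
      simp only [hA, Finset.mem_filter, Finset.mem_Icc]
      exact ⟨⟨hz1, by omega⟩, h⟩
  calc ((Finset.Icc 1 (n / 2 - q)).filter (fun z => S z ≠ S (z + q))).card
      ≤ (A ∪ B.image (fun z => z - q)).card := Finset.card_le_card hsub
    _ ≤ A.card + (B.image (fun z => z - q)).card := Finset.card_union_le _ _
    _ ≤ A.card + B.card := by
        have := Finset.card_image_le (s := B) (f := fun z => z - q); omega
    _ ≤ 2 * k := by omega
end

section
/- Let x and y be binary strings of equal length ℓ, and let S = x ∘ y ∘ x ∘ x be their concatenation, a string of length 4ℓ. Then the number of indices z with 1 ≤ z ≤ 3ℓ and S[z] ≠ S[z+ℓ] equals 2·HAM(x,y). In particular, for any k ≥ 0, ℓ is a k-period of S if and only if 2·HAM(x,y) ≤ k. -/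
/-- Hamming distance between the length-`ℓ` strings `u[1..ℓ]` and `v[1..ℓ]`. -/
def ham (u v : ℕ → Bool) (ℓ : ℕ) : ℕ :=
  ((Finset.Icc 1 ℓ).filter fun z => u z ≠ v z).card

theorem stmt_10 (ℓ : ℕ) (x y S : ℕ → Bool)
    (hS : ∀ z, 1 ≤ z → z ≤ ℓ →
      S z = x z ∧ S (ℓ + z) = y z ∧ S (2 * ℓ + z) = x z ∧ S (3 * ℓ + z) = x z) :
    ((Finset.Icc 1 (3 * ℓ)).filter fun z => S z ≠ S (z + ℓ)).card = 2 * ham x y ℓ ∧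
    ∀ k : ℕ, (((Finset.Icc 1 (4 * ℓ - ℓ)).filter fun z => S z ≠ S (z + ℓ)).card ≤ k ↔
      2 * ham x y ℓ ≤ k) := by
  set A := (Finset.Icc 1 ℓ).filter (fun z => x z ≠ y z) with hA
  have key : ((Finset.Icc 1 (3 * ℓ)).filter fun z => S z ≠ S (z + ℓ)).card = 2 * ham x y ℓ := by
    have hset : ((Finset.Icc 1 (3 * ℓ)).filter fun z => S z ≠ S (z + ℓ))
        = A ∪ A.image (· + ℓ) := by
      ext z
      simp only [hA, Finset.mem_filter, Finset.mem_Icc, Finset.mem_union, Finset.mem_image]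
      constructor
      · rintro ⟨⟨h1, h3⟩, hne⟩
        by_cases hc : z ≤ ℓ
        · left
          obtain ⟨e1, e2, -, -⟩ := hS z h1 hc
          have eb : S (z + ℓ) = y z := by rwa [add_comm] at e2
          exact ⟨⟨h1, hc⟩, fun h => hne (by rw [e1, eb, h])⟩
        · by_cases hc2 : z ≤ 2 * ℓ
          · right
            obtain ⟨-, e2, e3, -⟩ := hS (z - ℓ) (by omega) (by omega)
            have ea : S z = y (z - ℓ) := by
              rwa [show ℓ + (z - ℓ) = z by omega] at e2
            have eb : S (z + ℓ) = x (z - ℓ) := by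
              rwa [show 2 * ℓ + (z - ℓ) = z + ℓ by omega] at e3
            exact ⟨z - ℓ, ⟨⟨by omega, by omega⟩,
              fun h => hne (by rw [ea, eb, h])⟩, by omega⟩
          · exfalso
            obtain ⟨-, -, e3, e4⟩ := hS (z - 2 * ℓ) (by omega) (by omega)
            have ea : S z = x (z - 2 * ℓ) := by
              rwa [show 2 * ℓ + (z - 2 * ℓ) = z by omega] at e3
            have eb : S (z + ℓ) = x (z - 2 * ℓ) := by
              rwa [show 3 * ℓ + (z - 2 * ℓ) = z + ℓ by omega] at e4
            exact hne (ea.trans eb.symm)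
      · rintro (⟨⟨h1, h2⟩, hxy⟩ | ⟨w, ⟨⟨h1, h2⟩, hxy⟩, rfl⟩)
        · obtain ⟨e1, e2, -, -⟩ := hS z h1 h2
          have eb : S (z + ℓ) = y z := by rwa [add_comm] at e2
          refine ⟨⟨h1, by omega⟩, ?_⟩
          rw [e1, eb]
          exact fun h => hxy (by simpa using h)
        · obtain ⟨-, e2, e3, -⟩ := hS w h1 h2
          have ea : S (w + ℓ) = y w := by rwa [add_comm] at e2
          have eb : S (w + ℓ + ℓ) = x w := by
            rwa [show 2 * ℓ + w = w + ℓ + ℓ by omega] at e3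
          refine ⟨⟨by omega, by omega⟩, ?_⟩
          rw [ea, eb]
          exact fun h => hxy (by simpa using h.symm)
    have hdisj : Disjoint A (A.image (· + ℓ)) := by
      rw [Finset.disjoint_left]
      intro a ha hb
      simp only [hA, Finset.mem_filter, Finset.mem_Icc, Finset.mem_image] at ha hb
      obtain ⟨w, ⟨⟨hw1, hw2⟩, -⟩, rfl⟩ := hb
      omega
    rw [hset, Finset.card_union_of_disjoint hdisj,
      Finset.card_image_of_injective _ (add_left_injective ℓ)]
    simp [ham, hA, two_mul]
  refine ⟨key, fun k => ?_⟩
  rw [show 4 * ℓ - ℓ = 3 * ℓ by omega, key]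
end

section
/- Let w be the infinite binary string 1¹0¹1²0²1³0³… (the concatenation, over j ≥ 1, of j ones followed by j zeros), let n be divisible by 4, and let ν be the prefix of w of length n/4. Let k > 2 be even with n > 4(18k+1)(18k+2), let x be a binary string of length n/4 with HAM(x,ν) = k/2, let y be a binary string of length n/4 with HAM(x,y) ≤ k/2 + 1, and let S = x ∘ y ∘ x ∘ x, a string of length n. Then for every integer p with 1 ≤ p < n/4, the number of indices z with 1 ≤ z ≤ n−p and S[z] ≠ S[z+p] exceeds k; consequently, every k-period of S is at least n/4. -/
/-!
The string `w = infw` changes from `1` to `0` exactly after the positive squares. If a shift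
`p ≥ 1` preserved both descents at `j²` and `(j+1)²`, then `j² + p = a²` and `(j+1)² + p = b²`,
so `b² - a² = 2j + 1` with `a > j`, which is impossible. Hence every window
`[(2i+1)², (2i+2)² + 1]` contains a mismatch of `w` at shift `p`, and a prefix of length
`L = 4(2k+1)(2k+2)` has at least `2k+1` of them. Each of the `k/2` errors of `x` destroys at most
two mismatches, so `x` keeps `k+1` mismatches at every shift `q` with `L + q ≤ |x|`.
Finally, in the suffix `x ∘ x` of `S`, a shift `p < |x|` either acts inside one copy of `x`, or,
if `p > |x| - L`, compares the second copy with the first one shifted by `q = |x| - p < L`.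
-/

/-- The infinite binary string `1¹0¹1²0²1³0³…` (1-indexed): block `j ≥ 1` occupies
positions `(j-1)j + 1, …, j(j+1)`, with its first `j` positions (up to `j²`) equal
to `1` and the rest equal to `0`. -/
def infw (z : ℕ) : Bool :=
  (Finset.Icc 1 z).filter (fun j => j * (j - 1) < z ∧ z ≤ j * j) |>.Nonempty |> decide

open Finset

lemma infw_eq_true_iff {z : ℕ} :
    infw z = true ↔ ∃ j, 1 ≤ j ∧ j * (j - 1) < z ∧ z ≤ j * j := by
  simp only [infw, decide_eq_true_eq, Finset.filter_nonempty_iff, Finset.mem_Icc]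
  constructor
  · rintro ⟨j, ⟨hj, -⟩, h⟩
    exact ⟨j, hj, h⟩
  · rintro ⟨j, hj, hlt, hle⟩
    refine ⟨j, ⟨hj, ?_⟩, hlt, hle⟩
    have : j - 1 ≤ j * (j - 1) := Nat.le_mul_of_pos_left _ hj
    omega

lemma infw_sq {j : ℕ} (hj : 1 ≤ j) : infw (j * j) = true :=
  infw_eq_true_iff.2 ⟨j, hj, Nat.mul_lt_mul_of_pos_left (by omega) (by omega), le_rfl⟩

lemma infw_sq_add_one {j : ℕ} (hj : 1 ≤ j) : infw (j * j + 1) = false := by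
  rw [← Bool.not_eq_true, infw_eq_true_iff]
  rintro ⟨i, hi, hlt, hle⟩
  rcases lt_trichotomy i j with h | rfl | h
  · nlinarith
  · omega
  · have : j * j + 1 ≤ i * (i - 1) := by
      calc j * j + 1 ≤ (j + 1) * j := by nlinarith
        _ ≤ i * (i - 1) := Nat.mul_le_mul (by omega) (by omega)
    omega

lemma exists_eq_sq_of_infw_descent {z : ℕ} (h1 : infw z = true) (h0 : infw (z + 1) = false) :
    ∃ i, z = i * i := by
  obtain ⟨i, hi, hlt, hle⟩ := infw_eq_true_iff.1 h1
  refine ⟨i, le_antisymm hle (not_lt.1 fun h => ?_)⟩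
  have := infw_eq_true_iff.2 ⟨i, hi, by omega, h⟩
  simp_all

lemma exists_sq_of_infw_shift {j p : ℕ} (hj : 1 ≤ j)
    (h1 : infw (j * j + p) = infw (j * j)) (h2 : infw (j * j + 1 + p) = infw (j * j + 1)) :
    ∃ a, j * j + p = a * a :=
  exists_eq_sq_of_infw_descent (h1.trans (infw_sq hj))
    (by rw [add_right_comm, h2, infw_sq_add_one hj])

lemma exists_infw_shift_ne {j p : ℕ} (hj : 1 ≤ j) (hp : 1 ≤ p) :
    ∃ z, j * j ≤ z ∧ z ≤ (j + 1) * (j + 1) + 1 ∧ infw z ≠ infw (z + p) := by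
  by_contra! h
  have hsq : (j + 1) * (j + 1) = j * j + 2 * j + 1 := by ring
  obtain ⟨a, ha⟩ := exists_sq_of_infw_shift hj (h (j * j) le_rfl (by omega)).symm
    (h (j * j + 1) (by omega) (by omega)).symm
  obtain ⟨b, hb⟩ := exists_sq_of_infw_shift (j := j + 1) (by omega)
    (h ((j + 1) * (j + 1)) (by omega) (by omega)).symm
    (h ((j + 1) * (j + 1) + 1) (by omega) le_rfl).symm
  have hja : j < a := Nat.mul_self_lt_mul_self_iff.1 (by omega)
  have hab : a < b := Nat.mul_self_lt_mul_self_iff.1 (by omega)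
  have : (a + 1) * (a + 1) ≤ b * b := Nat.mul_self_le_mul_self hab
  nlinarith

def shiftMismatches (u : ℕ → Bool) (p N : ℕ) : Finset ℕ :=
  (Icc 1 N).filter fun z => u z ≠ u (z + p)

lemma card_shiftMismatches_lt {u : ℕ → Bool} {p M N z : ℕ} (hMz : M < z) (hzN : z ≤ N)
    (hz : u z ≠ u (z + p)) : (shiftMismatches u p M).card < (shiftMismatches u p N).card := by
  refine card_lt_card ((ssubset_iff_of_subset ?_).2 ⟨z, ?_, ?_⟩)
  · exact filter_subset_filter _ (Icc_subset_Icc_right (by omega))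
  · exact mem_filter.2 ⟨mem_Icc.2 ⟨by omega, hzN⟩, hz⟩
  · simp only [shiftMismatches, mem_filter, mem_Icc]
    omega

/-- The windows `[(2i+1)², (2i+2)² + 1]`, `i < t`, each contribute a mismatch. -/
lemma le_card_shiftMismatches_infw {p : ℕ} (hp : 1 ≤ p) (t : ℕ) :
    t ≤ (shiftMismatches infw p (4 * t * (t + 1))).card := by
  induction t with
  | zero => exact Nat.zero_le _
  | succ t ih =>
    obtain ⟨z, hz1, hz2, hz⟩ := exists_infw_shift_ne (j := 2 * t + 1) (by omega) hp
    have := card_shiftMismatches_lt (M := 4 * t * (t + 1)) (N := 4 * (t + 1) * (t + 1 + 1))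
      (by nlinarith) (by nlinarith) hz
    omega

lemma ham_mono (u v : ℕ → Bool) {N M : ℕ} (h : N ≤ M) : ham u v N ≤ ham u v M :=
  card_le_card (filter_subset_filter _ (Icc_subset_Icc_right h))

lemma card_shiftMismatches_le_add_ham (u v : ℕ → Bool) (p N : ℕ) :
    (shiftMismatches u p N).card ≤ (shiftMismatches v p N).card + 2 * ham v u (N + p) := by
  set A := (Icc 1 N).filter fun z => v z ≠ u z
  set B := (Icc 1 N).filter fun z => v (z + p) ≠ u (z + p)
  have hA : A.card ≤ ham v u (N + p) :=
    card_le_card (filter_subset_filter _ (Icc_subset_Icc_right (by omega)))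
  have hB : B.card ≤ ham v u (N + p) := by
    refine card_le_card_of_injOn (· + p) (fun z hz => ?_) (add_left_injective p).injOn
    simp only [B, mem_coe, mem_filter, mem_Icc] at hz ⊢
    exact ⟨⟨by omega, by omega⟩, hz.2⟩
  have hsub : shiftMismatches u p N ⊆ shiftMismatches v p N ∪ A ∪ B := by
    intro z hz
    simp only [shiftMismatches, A, B, mem_union, mem_filter] at hz ⊢
    by_cases h1 : v z = u z <;> by_cases h2 : v (z + p) = u (z + p) <;> simp_all
  calc (shiftMismatches u p N).card ≤ (shiftMismatches v p N ∪ A ∪ B).card := card_le_card hsub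
    _ ≤ (shiftMismatches v p N).card + A.card + B.card :=
      (card_union_le _ _).trans (Nat.add_le_add_right (card_union_le _ _) _)
    _ ≤ _ := by omega

lemma le_card_shiftMismatches_add_ham_infw (u : ℕ → Bool) {q : ℕ} (hq : 1 ≤ q) (t : ℕ) :
    t ≤ (shiftMismatches u q (4 * t * (t + 1))).card + 2 * ham u infw (4 * t * (t + 1) + q) :=
  (le_card_shiftMismatches_infw hq t).trans (card_shiftMismatches_le_add_ham infw u q _)

lemma card_shiftMismatches_le_of_translate {u v : ℕ → Bool} {q p L c N : ℕ} (hN : c + L ≤ N)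
    (h : ∀ z, 1 ≤ z → z ≤ L → u z ≠ u (z + q) → v (c + z) ≠ v (c + z + p)) :
    (shiftMismatches u q L).card ≤ (shiftMismatches v p N).card := by
  refine card_le_card_of_injOn (c + ·) (fun z hz => ?_) (add_right_injective c).injOn
  simp only [shiftMismatches, mem_coe, mem_filter, mem_Icc] at hz ⊢
  exact ⟨⟨by omega, by omega⟩, h z hz.1.1 hz.1.2 hz.2⟩

lemma exists_card_shiftMismatches_le_of_square {x S : ℕ → Bool} {m c p L N : ℕ}
    (hS : ∀ z, 1 ≤ z → z ≤ m → S (c + z) = x z ∧ S (c + m + z) = x z)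
    (hp : 1 ≤ p) (hpm : p < m) (hL : 2 * L ≤ m) (hN : c + 2 * m ≤ N + p) :
    ∃ q, 1 ≤ q ∧ L + q ≤ m ∧ (shiftMismatches x q L).card ≤ (shiftMismatches S p N).card := by
  by_cases hpL : p + L ≤ m
  · refine ⟨p, hp, by omega, card_shiftMismatches_le_of_translate (c := c) (by omega) ?_⟩
    intro z hz1 hz2 hz
    rwa [(hS z hz1 (by omega)).1, add_assoc, (hS (z + p) (by omega) (by omega)).1]
  · refine ⟨m - p, by omega, by omega,
      card_shiftMismatches_le_of_translate (c := c + (m - p)) (by omega) ?_⟩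
    intro z hz1 hz2 hz
    have h1 := (hS (z + (m - p)) (by omega) (by omega)).1
    have h2 := (hS z hz1 (by omega)).2
    rw [show c + (m - p) + z = c + (z + (m - p)) by omega, h1,
      show c + (z + (m - p)) + p = c + m + z by omega, h2]
    exact hz.symm

theorem stmt_12_general (n k : ℕ) (hk : 2 < k)
    (hnk : n > 4 * (18 * k + 1) * (18 * k + 2))
    (x y S : ℕ → Bool)
    (hx : ham x infw (n / 4) = k / 2)
    (hS : ∀ z, 1 ≤ z → z ≤ n / 4 →
      S z = x z ∧ S (n / 4 + z) = y z ∧ S (2 * (n / 4) + z) = x z ∧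
        S (3 * (n / 4) + z) = x z) :
    (∀ p, 1 ≤ p → p < n / 4 →
      k < ((Finset.Icc 1 (n - p)).filter fun z => S z ≠ S (z + p)).card) ∧
    (∀ p, 1 ≤ p → p ≤ n →
      ((Finset.Icc 1 (n - p)).filter fun z => S z ≠ S (z + p)).card ≤ k →
      n / 4 ≤ p) := by
  set m := n / 4
  have hn4 : 4 * m ≤ n := Nat.mul_div_le n 4
  have hL : 2 * (4 * (2 * k + 1) * (2 * k + 1 + 1)) ≤ m := by
    have : (18 * k + 1) * (18 * k + 2) ≤ m := by rw [mul_assoc] at hnk; omega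
    nlinarith
  have hxx : ∀ z, 1 ≤ z → z ≤ m → S (2 * m + z) = x z ∧ S (2 * m + m + z) = x z :=
    fun z h1 h2 => ⟨(hS z h1 h2).2.2.1, by rw [← (hS z h1 h2).2.2.2]; ring_nf⟩
  have key : ∀ p, 1 ≤ p → p < m → k < (shiftMismatches S p (n - p)).card := by
    intro p hp hpm
    obtain ⟨q, hq, hLq, hle⟩ :=
      exists_card_shiftMismatches_le_of_square (N := n - p) hxx hp hpm hL (by omega)
    have hcount := le_card_shiftMismatches_add_ham_infw x hq (2 * k + 1)
    have hham := ham_mono x infw hLq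
    omega
  exact ⟨key, fun p hp _ hcard => not_lt.1 fun hpm => (key p hp hpm).not_ge hcard⟩

theorem stmt_12 (n k : ℕ) (hn : 4 ∣ n) (hk : 2 < k) (hke : 2 ∣ k)
    (hnk : n > 4 * (18 * k + 1) * (18 * k + 2))
    (x y S : ℕ → Bool)
    (hx : ham x infw (n / 4) = k / 2)
    (hy : ham x y (n / 4) ≤ k / 2 + 1)
    (hS : ∀ z, 1 ≤ z → z ≤ n / 4 →
      S z = x z ∧ S (n / 4 + z) = y z ∧ S (2 * (n / 4) + z) = x z ∧
        S (3 * (n / 4) + z) = x z) :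
    (∀ p, 1 ≤ p → p < n / 4 →
      k < ((Finset.Icc 1 (n - p)).filter fun z => S z ≠ S (z + p)).card) ∧
    (∀ p, 1 ≤ p → p ≤ n →
      ((Finset.Icc 1 (n - p)).filter fun z => S z ≠ S (z + p)).card ≤ k →
      n / 4 ≤ p) :=
  stmt_12_general n k hk hnk x y S hx hS
end

section
/- Let ν, x, x′ be binary strings of length ℓ with x ≠ x′ and HAM(x,ν) = HAM(x′,ν) = r for some r ≥ 1, and let I be the set of positions at which x or x′ differs from ν. Let y be a binary string of length ℓ with HAM(x,y) = r such that x and y agree at every position of I. Then HAM(x′,y) ≥ r + 1. -/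
theorem stmt_13 (ℓ r : ℕ) (ν x x' y : ℕ → Bool) (hr : 1 ≤ r)
    (hne : ∃ z ∈ Finset.Icc 1 ℓ, x z ≠ x' z)
    (hx : ham x ν ℓ = r) (hx' : ham x' ν ℓ = r)
    (hxy : ham x y ℓ = r)
    (hagree : ∀ z ∈ (Finset.Icc 1 ℓ).filter (fun z => x z ≠ ν z ∨ x' z ≠ ν z),
      x z = y z) :
    ham x' y ℓ ≥ r + 1 := by
  obtain ⟨z0, hz0S, hz0⟩ := hne
  unfold ham at *
  have hz0I : x z0 ≠ ν z0 ∨ x' z0 ≠ ν z0 := by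
    by_contra h
    push_neg at h
    exact hz0 (h.1.trans h.2.symm)
  have hyz0 : y z0 = x z0 := (hagree z0 (Finset.mem_filter.mpr ⟨hz0S, hz0I⟩)).symm
  have hsub : (Finset.Icc 1 ℓ).filter (fun z => x z ≠ y z) ⊂
      (Finset.Icc 1 ℓ).filter (fun z => x' z ≠ y z) := by
    constructor
    · intro z hz
      simp only [Finset.mem_filter] at hz ⊢
      refine ⟨hz.1, ?_⟩
      by_cases hI : x z ≠ ν z ∨ x' z ≠ ν z
      · exact absurd (hagree z (Finset.mem_filter.mpr ⟨hz.1, hI⟩)) hz.2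
      · push_neg at hI
        rw [hI.2, ← hI.1]; exact hz.2
    · intro hcon
      have hm := hcon (Finset.mem_filter.mpr ⟨hz0S, by
        rw [hyz0]; exact fun h => hz0 h.symm⟩)
      simp only [Finset.mem_filter] at hm
      rw [hyz0] at hm
      exact hm.2 rfl
  have := Finset.card_lt_card hsub
  omega
end
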